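/- Derivability of the deep game-monotonicity principle in HilbFull: for every L_NF-formula context ψ(−) with a unique game-position hole, every game δ ∈ G_NF and every formula χ ∈ L_NF, HilbFull ⊢ ψ(δ) → ψ(χ! ; δ), where ψ(δ) denotes the result of filling the hole with δ (formulas viewed in L_Full via the inclusion of L_NF into L_Full). -/

import Mathlib

/-! Normal-form game logic: syntax -/

mutual
inductive GLForm : Type where
  | atom  : ℕ → GLForm
  | natom : ℕ → GLForm
  | or    : GLForm → GLForm → GLForm
  | and   : GLForm → GLForm → GLForm
  | dia   : GLGame → GLForm → GLForm
inductive GLGame : Type where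
  | atg   : ℕ → GLGame
  | atgd  : ℕ → GLGame
  | comp  : GLGame → GLGame → GLGame
  | cha   : GLGame → GLGame → GLGame
  | chd   : GLGame → GLGame → GLGame
  | star  : GLGame → GLGame
  | cross : GLGame → GLGame
  | test  : GLForm → GLGame
  | dtest : GLForm → GLGame
end

noncomputable instance : DecidableEq GLForm := Classical.decEq _
noncomputable instance : DecidableEq GLGame := Classical.decEq _

/-! Formula contexts for game logic: a context is a formula (resp. game) with a
    unique occurrence of a hole, which sits either in formula position or in game
    position.  `fill` substitutes the hole. -/

mutual
/-- Formula context with a unique formula-position hole. -/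
inductive FCtxF : Type where
  | hole : FCtxF
  | orL  : FCtxF → GLForm → FCtxF
  | orR  : GLForm → FCtxF → FCtxF
  | andL : FCtxF → GLForm → FCtxF
  | andR : GLForm → FCtxF → FCtxF
  | diaG : GCtxF → GLForm → FCtxF
  | diaF : GLGame → FCtxF → FCtxF
/-- Game context with a unique formula-position hole. -/
inductive GCtxF : Type where
  | compL : GCtxF → GLGame → GCtxF
  | compR : GLGame → GCtxF → GCtxF
  | chaL  : GCtxF → GLGame → GCtxF
  | chaR  : GLGame → GCtxF → GCtxF
  | chdL  : GCtxF → GLGame → GCtxF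
  | chdR  : GLGame → GCtxF → GCtxF
  | star  : GCtxF → GCtxF
  | cross : GCtxF → GCtxF
  | test  : FCtxF → GCtxF
  | dtest : FCtxF → GCtxF
end

mutual
/-- Formula context with a unique game-position hole. -/
inductive FCtxG : Type where
  | orL  : FCtxG → GLForm → FCtxG
  | orR  : GLForm → FCtxG → FCtxG
  | andL : FCtxG → GLForm → FCtxG
  | andR : GLForm → FCtxG → FCtxG
  | diaG : GCtxG → GLForm → FCtxG
  | diaF : GLGame → FCtxG → FCtxG
/-- Game context with a unique game-position hole. -/
inductive GCtxG : Type where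
  | hole  : GCtxG
  | compL : GCtxG → GLGame → GCtxG
  | compR : GLGame → GCtxG → GCtxG
  | chaL  : GCtxG → GLGame → GCtxG
  | chaR  : GLGame → GCtxG → GCtxG
  | chdL  : GCtxG → GLGame → GCtxG
  | chdR  : GLGame → GCtxG → GCtxG
  | star  : GCtxG → GCtxG
  | cross : GCtxG → GCtxG
  | test  : FCtxG → GCtxG
  | dtest : FCtxG → GCtxG
end

mutual
def FCtxF.fill : FCtxF → GLForm → GLForm
  | .hole, χ => χ
  | .orL c ψ, χ => .or (FCtxF.fill c χ) ψ
  | .orR φ c, χ => .or φ (FCtxF.fill c χ)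
  | .andL c ψ, χ => .and (FCtxF.fill c χ) ψ
  | .andR φ c, χ => .and φ (FCtxF.fill c χ)
  | .diaG c φ, χ => .dia (GCtxF.fill c χ) φ
  | .diaF γ c, χ => .dia γ (FCtxF.fill c χ)
def GCtxF.fill : GCtxF → GLForm → GLGame
  | .compL c δ, χ => .comp (GCtxF.fill c χ) δ
  | .compR γ c, χ => .comp γ (GCtxF.fill c χ)
  | .chaL c δ, χ => .cha (GCtxF.fill c χ) δ
  | .chaR γ c, χ => .cha γ (GCtxF.fill c χ)
  | .chdL c δ, χ => .chd (GCtxF.fill c χ) δ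
  | .chdR γ c, χ => .chd γ (GCtxF.fill c χ)
  | .star c, χ => .star (GCtxF.fill c χ)
  | .cross c, χ => .cross (GCtxF.fill c χ)
  | .test c, χ => .test (FCtxF.fill c χ)
  | .dtest c, χ => .dtest (FCtxF.fill c χ)
end

mutual
def FCtxG.fillG : FCtxG → GLGame → GLForm
  | .orL c ψ, δ => .or (FCtxG.fillG c δ) ψ
  | .orR φ c, δ => .or φ (FCtxG.fillG c δ)
  | .andL c ψ, δ => .and (FCtxG.fillG c δ) ψ
  | .andR φ c, δ => .and φ (FCtxG.fillG c δ)
  | .diaG c φ, δ => .dia (GCtxG.fillG c δ) φ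
  | .diaF γ c, δ => .dia γ (FCtxG.fillG c δ)
def GCtxG.fillG : GCtxG → GLGame → GLGame
  | .hole, δ => δ
  | .compL c δ', δ => .comp (GCtxG.fillG c δ) δ'
  | .compR γ c, δ => .comp γ (GCtxG.fillG c δ)
  | .chaL c δ', δ => .cha (GCtxG.fillG c δ) δ'
  | .chaR γ c, δ => .cha γ (GCtxG.fillG c δ)
  | .chdL c δ', δ => .chd (GCtxG.fillG c δ) δ'
  | .chdR γ c, δ => .chd γ (GCtxG.fillG c δ)
  | .star c, δ => .star (GCtxG.fillG c δ)
  | .cross c, δ => .cross (GCtxG.fillG c δ)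
  | .test c, δ => .test (FCtxG.fillG c δ)
  | .dtest c, δ => .dtest (FCtxG.fillG c δ)
end

/-! The full language of game logic: syntax, abbreviations, propositional
    tautologies, and the Hilbert system HilbFull. -/

mutual
inductive FullForm : Type where
  | atom : ℕ → FullForm
  | neg  : FullForm → FullForm
  | or   : FullForm → FullForm → FullForm
  | dia  : FullGame → FullForm → FullForm
inductive FullGame : Type where
  | atg   : ℕ → FullGame
  | comp  : FullGame → FullGame → FullGame
  | cha   : FullGame → FullGame → FullGame
  | chd   : FullGame → FullGame → FullGame
  | star  : FullGame → FullGame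
  | cross : FullGame → FullGame
  | dual  : FullGame → FullGame
  | test  : FullForm → FullGame
  | dtest : FullForm → FullGame
end

/-- Implication, as the usual abbreviation. -/
def fimp (φ ψ : FullForm) : FullForm := .or (.neg φ) ψ
/-- Conjunction, as the usual abbreviation. -/
def fand (φ ψ : FullForm) : FullForm := .neg (.or (.neg φ) (.neg ψ))
/-- Bi-implication, as the usual abbreviation. -/
def fiff (φ ψ : FullForm) : FullForm := fand (fimp φ ψ) (fimp ψ φ)

/-- Propositional evaluation of a formula relative to an arbitrary assignment of
    truth values to its non-Boolean components. -/
def fpeval (v : FullForm → Prop) : FullForm → Prop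
  | .atom p  => v (.atom p)
  | .neg φ   => ¬ fpeval v φ
  | .or φ ψ  => fpeval v φ ∨ fpeval v ψ
  | .dia γ φ => v (.dia γ φ)

/-- `φ` is (a substitution instance of) a propositional tautology. -/
def FTaut (φ : FullForm) : Prop := ∀ v, fpeval v φ

/-- The Hilbert system HilbFull for the full language of game logic. -/
inductive HilbFull : FullForm → Prop
  | taut {φ} : FTaut φ → HilbFull φ
  | axComp {γ δ φ} : HilbFull (fiff (.dia (.comp γ δ) φ) (.dia γ (.dia δ φ)))
  | axCha {γ δ φ} : HilbFull (fiff (.dia (.cha γ δ) φ) (.or (.dia γ φ) (.dia δ φ)))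
  | axStar {γ φ} : HilbFull (fiff (.dia (.star γ) φ) (.or φ (.dia γ (.dia (.star γ) φ))))
  | axTest {ψ φ} : HilbFull (fiff (.dia (.test ψ) φ) (fand ψ φ))
  | axDual {γ φ} : HilbFull (fiff (.dia (.dual γ) φ) (.neg (.dia γ (.neg φ))))
  | axChd {γ δ φ} : HilbFull (fiff (.dia (.chd γ δ) φ) (fand (.dia γ φ) (.dia δ φ)))
  | axCross {γ φ} : HilbFull (fiff (.dia (.cross γ) φ) (fand φ (.dia γ (.dia (.cross γ) φ))))
  | axDtest {ψ φ} : HilbFull (fiff (.dia (.dtest ψ) φ) (.or ψ φ))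
  | mp {φ ψ} : HilbFull φ → HilbFull (fimp φ ψ) → HilbFull ψ
  | mon {φ ψ} (γ) : HilbFull (fimp φ ψ) → HilbFull (fimp (.dia γ φ) (.dia γ ψ))
  | barInd {γ φ} : HilbFull (fimp (.dia γ φ) φ) → HilbFull (fimp (.dia (.star γ) φ) φ)
  | barIndCross {γ φ} : HilbFull (fimp φ (.dia γ φ)) → HilbFull (fimp φ (.dia (.cross γ) φ))

/-! The embedding of the normal-form language into the full language. -/

mutual
def GLForm.toFull : GLForm → FullForm
  | .atom p  => .atom p
  | .natom p => .neg (.atom p)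
  | .or φ ψ  => .or (GLForm.toFull φ) (GLForm.toFull ψ)
  | .and φ ψ => fand (GLForm.toFull φ) (GLForm.toFull ψ)
  | .dia γ φ => .dia (GLGame.toFull γ) (GLForm.toFull φ)
def GLGame.toFull : GLGame → FullGame
  | .atg g  => .atg g
  | .atgd g => .dual (.atg g)
  | .comp γ δ => .comp (GLGame.toFull γ) (GLGame.toFull δ)
  | .cha γ δ  => .cha (GLGame.toFull γ) (GLGame.toFull δ)
  | .chd γ δ  => .chd (GLGame.toFull γ) (GLGame.toFull δ)
  | .star γ  => .star (GLGame.toFull γ)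
  | .cross γ => .cross (GLGame.toFull γ)
  | .test φ  => .test (GLForm.toFull φ)
  | .dtest φ => .dtest (GLForm.toFull φ)
end

/-!
Call a game `γ` below `γ'` when `⟨γ⟩φ → ⟨γ'⟩φ` is derivable for every `φ`. Every game
constructor preserves this order: the reduction axioms turn it into propositional
monotonicity, except for `γ*` and `γ×`, where (demonic) bar induction is needed because their
axioms are fixpoint equations. Together with the monotonicity of the formula connectives,
a mutual induction over the context shows that `ψ(δ) → ψ(δ')` whenever `δ` is below `δ'`.
Finally `δ` is below `χ! ; δ`, since `⟨δ⟩φ → χ ∨ ⟨δ⟩φ` and `χ ∨ ⟨δ⟩φ ↔ ⟨χ!⟩⟨δ⟩φ ↔ ⟨χ! ; δ⟩φ`.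
-/

namespace HilbFull

theorem of_taut_imp {A B : FullForm} (t : FTaut (fimp A B)) (hA : HilbFull A) : HilbFull B :=
  hA.mp (.taut t)

theorem of_taut_imp₂ {A B C : FullForm} (t : FTaut (fimp A (fimp B C)))
    (hA : HilbFull A) (hB : HilbFull B) : HilbFull C :=
  hB.mp (hA.mp (.taut t))

theorem imp_of_iff {A B : FullForm} (h : HilbFull (fiff A B)) : HilbFull (fimp A B) :=
  of_taut_imp (fun v => by simp only [fpeval, fimp, fand, fiff]; tauto) h

theorem imp_of_iff_symm {A B : FullForm} (h : HilbFull (fiff A B)) : HilbFull (fimp B A) :=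
  of_taut_imp (fun v => by simp only [fpeval, fimp, fand, fiff]; tauto) h

theorem imp_refl (A : FullForm) : HilbFull (fimp A A) :=
  .taut fun v => by simp only [fpeval, fimp]; tauto

theorem imp_trans {A B C : FullForm} (hAB : HilbFull (fimp A B)) (hBC : HilbFull (fimp B C)) :
    HilbFull (fimp A C) :=
  of_taut_imp₂ (fun v => by simp only [fpeval, fimp]; tauto) hAB hBC

theorem or_imp_or {A B C D : FullForm} (hAB : HilbFull (fimp A B)) (hCD : HilbFull (fimp C D)) :
    HilbFull (fimp (.or A C) (.or B D)) :=
  of_taut_imp₂ (fun v => by simp only [fpeval, fimp]; tauto) hAB hCD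

theorem and_imp_and {A B C D : FullForm} (hAB : HilbFull (fimp A B)) (hCD : HilbFull (fimp C D)) :
    HilbFull (fimp (fand A C) (fand B D)) :=
  of_taut_imp₂ (fun v => by simp only [fpeval, fimp, fand]; tauto) hAB hCD

theorem imp_dia_star (γ : FullGame) (φ : FullForm) : HilbFull (fimp φ (.dia (.star γ) φ)) :=
  imp_trans (.taut fun v => by simp only [fpeval, fimp]; tauto) (imp_of_iff_symm axStar)

theorem dia_dia_star_imp_dia_star (γ : FullGame) (φ : FullForm) :
    HilbFull (fimp (.dia γ (.dia (.star γ) φ)) (.dia (.star γ) φ)) :=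
  imp_trans (.taut fun v => by simp only [fpeval, fimp]; tauto) (imp_of_iff_symm axStar)

theorem dia_cross_imp (γ : FullGame) (φ : FullForm) : HilbFull (fimp (.dia (.cross γ) φ) φ) :=
  imp_trans (imp_of_iff axCross) (.taut fun v => by simp only [fpeval, fimp, fand]; tauto)

theorem dia_cross_imp_dia_dia_cross (γ : FullGame) (φ : FullForm) :
    HilbFull (fimp (.dia (.cross γ) φ) (.dia γ (.dia (.cross γ) φ))) :=
  imp_trans (imp_of_iff axCross) (.taut fun v => by simp only [fpeval, fimp, fand]; tauto)

end HilbFull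

open HilbFull

def GameLE (γ γ' : FullGame) : Prop :=
  ∀ φ : FullForm, HilbFull (fimp (.dia γ φ) (.dia γ' φ))

namespace GameLE

variable {γ γ' δ δ' : FullGame}

theorem comp_left (h : GameLE γ γ') (δ : FullGame) : GameLE (.comp γ δ) (.comp γ' δ) :=
  fun φ => imp_trans (imp_of_iff axComp) (imp_trans (h (.dia δ φ)) (imp_of_iff_symm axComp))

theorem comp_right (γ : FullGame) (h : GameLE δ δ') : GameLE (.comp γ δ) (.comp γ δ') :=
  fun φ => imp_trans (imp_of_iff axComp) (imp_trans (.mon γ (h φ)) (imp_of_iff_symm axComp))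

theorem cha_left (h : GameLE γ γ') (δ : FullGame) : GameLE (.cha γ δ) (.cha γ' δ) :=
  fun φ => imp_trans (imp_of_iff axCha)
    (imp_trans (or_imp_or (h φ) (imp_refl _)) (imp_of_iff_symm axCha))

theorem cha_right (γ : FullGame) (h : GameLE δ δ') : GameLE (.cha γ δ) (.cha γ δ') :=
  fun φ => imp_trans (imp_of_iff axCha)
    (imp_trans (or_imp_or (imp_refl _) (h φ)) (imp_of_iff_symm axCha))

theorem chd_left (h : GameLE γ γ') (δ : FullGame) : GameLE (.chd γ δ) (.chd γ' δ) :=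
  fun φ => imp_trans (imp_of_iff axChd)
    (imp_trans (and_imp_and (h φ) (imp_refl _)) (imp_of_iff_symm axChd))

theorem chd_right (γ : FullGame) (h : GameLE δ δ') : GameLE (.chd γ δ) (.chd γ δ') :=
  fun φ => imp_trans (imp_of_iff axChd)
    (imp_trans (and_imp_and (imp_refl _) (h φ)) (imp_of_iff_symm axChd))

/-- `⟨γ'*⟩φ` is a prefixed point of `⟨γ⟩`, so bar induction bounds `⟨γ*⟩⟨γ'*⟩φ` by it. -/
theorem star (h : GameLE γ γ') : GameLE (.star γ) (.star γ') := fun φ =>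
  have hPre : HilbFull (fimp (.dia γ (.dia (.star γ') φ)) (.dia (.star γ') φ)) :=
    imp_trans (h _) (dia_dia_star_imp_dia_star γ' φ)
  imp_trans (.mon (.star γ) (imp_dia_star γ' φ)) (.barInd hPre)

/-- `⟨γ×⟩φ` is a postfixed point of `⟨γ'⟩`, so demonic bar induction gives `⟨γ'×⟩⟨γ×⟩φ`. -/
theorem cross (h : GameLE γ γ') : GameLE (.cross γ) (.cross γ') := fun φ =>
  have hPost : HilbFull (fimp (.dia (.cross γ) φ) (.dia γ' (.dia (.cross γ) φ))) :=
    imp_trans (dia_cross_imp_dia_dia_cross γ φ) (h _)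
  imp_trans (.barIndCross hPost) (.mon (.cross γ') (dia_cross_imp γ φ))

theorem test {ψ ψ' : FullForm} (h : HilbFull (fimp ψ ψ')) : GameLE (.test ψ) (.test ψ') :=
  fun φ => imp_trans (imp_of_iff axTest)
    (imp_trans (and_imp_and h (imp_refl φ)) (imp_of_iff_symm axTest))

theorem dtest {ψ ψ' : FullForm} (h : HilbFull (fimp ψ ψ')) : GameLE (.dtest ψ) (.dtest ψ') :=
  fun φ => imp_trans (imp_of_iff axDtest)
    (imp_trans (or_imp_or h (imp_refl φ)) (imp_of_iff_symm axDtest))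

theorem le_comp_dtest (δ : FullGame) (χ : FullForm) : GameLE δ (.comp (.dtest χ) δ) := fun φ =>
  imp_trans (.taut fun v => by simp only [fpeval, fimp]; tauto)
    (imp_trans (imp_of_iff_symm axDtest) (imp_of_iff_symm axComp))

end GameLE

section FillMono

variable {δ δ' : GLGame}

mutual
theorem FCtxG.fillG_mono (c : FCtxG) (h : GameLE δ.toFull δ'.toFull) :
    HilbFull (fimp (c.fillG δ).toFull (c.fillG δ').toFull) := by
  cases c with
  | orL c ψ => exact or_imp_or (c.fillG_mono h) (imp_refl _)
  | orR ψ c => exact or_imp_or (imp_refl _) (c.fillG_mono h)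
  | andL c ψ => exact and_imp_and (c.fillG_mono h) (imp_refl _)
  | andR ψ c => exact and_imp_and (imp_refl _) (c.fillG_mono h)
  | diaG c φ => exact c.fillG_mono h φ.toFull
  | diaF γ c => exact .mon γ.toFull (c.fillG_mono h)

theorem GCtxG.fillG_mono (c : GCtxG) (h : GameLE δ.toFull δ'.toFull) :
    GameLE (c.fillG δ).toFull (c.fillG δ').toFull := by
  cases c with
  | hole => exact h
  | compL c γ => exact (c.fillG_mono h).comp_left γ.toFull
  | compR γ c => exact GameLE.comp_right γ.toFull (c.fillG_mono h)
  | chaL c γ => exact (c.fillG_mono h).cha_left γ.toFull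
  | chaR γ c => exact GameLE.cha_right γ.toFull (c.fillG_mono h)
  | chdL c γ => exact (c.fillG_mono h).chd_left γ.toFull
  | chdR γ c => exact GameLE.chd_right γ.toFull (c.fillG_mono h)
  | star c => exact (c.fillG_mono h).star
  | cross c => exact (c.fillG_mono h).cross
  | test c => exact GameLE.test (c.fillG_mono h)
  | dtest c => exact GameLE.dtest (c.fillG_mono h)
end

end FillMono

/-- Derivability of the deep game-monotonicity principle in
    `HilbFull`: for every `L_NF`-formula context `ψ(−)` with a unique
    game-position hole, every game `δ ∈ G_NF` and every formula `χ ∈ L_NF`,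
    `HilbFull ⊢ ψ(δ) → ψ(χ! ; δ)` (formulas viewed in `L_Full` via the inclusion
    of `L_NF` into `L_Full`). -/
theorem deep_game_monotonicity_derivable (c : FCtxG) (δ : GLGame) (χ : GLForm) :
    HilbFull (fimp (GLForm.toFull (c.fillG δ))
                   (GLForm.toFull (c.fillG (.comp (.dtest χ) δ)))) :=
  c.fillG_mono (GameLE.le_comp_dtest δ.toFull χ.toFull)
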